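/- arXiv:2106.07572 — 2 statements merged into one kernel-verified Lean document; each statement's English description precedes it below -/
import Mathlib

section
/- Let V be a finite-dimensional real inner product space with two inner products g and h, and suppose g(u,u) ≤ C·h(u,u) for all u ∈ V, where C > 0. Then the induced inner products g^k and h^k on the k-th exterior power Λ^k(V) satisfy g^k(w,w) ≤ C^k·h^k(w,w) for all w ∈ Λ^k(V). -/
/-!
Diagonalise `g` simultaneously with `h`: in an `h`-orthonormal basis `b` of `V` the form `g` is
diagonal with entries `μᵢ`, and `g ≤ C h` together with `g > 0` gives `0 ≤ μᵢ ≤ C`. The Gram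
matrices of the subfamilies `b ∘ s`, `b ∘ t` for `k`-subsets `s`, `t` are submatrices of a diagonal
matrix, so the wedges `b_s` form a basis of `⋀^k V` that is orthonormal for `hk` and orthogonal for
`gk` with `gk (b_s, b_s) = ∏_{i ∈ s} μᵢ ≤ C ^ k`. Since `ι` spans, `Λ` is a quotient of `⋀^k V`,
and expanding `w` in this basis compares the two quadratic forms term by term.
-/

open Module Matrix Set.powersetCard exteriorPower

theorem LinearMap.BilinForm.exists_basis_simultaneously_diagonal
    {V : Type*} [AddCommGroup V] [Module ℝ V] [FiniteDimensional ℝ V]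
    (g h : V →ₗ[ℝ] V →ₗ[ℝ] ℝ) (hg_symm : ∀ u v, g u v = g v u)
    (hh_symm : ∀ u v, h u v = h v u) (hh_pos : ∀ u, u ≠ 0 → 0 < h u u) :
    ∃ (b : Basis (Fin (finrank ℝ V)) ℝ V) (μ : Fin (finrank ℝ V) → ℝ),
      (∀ i j, h (b i) (b j) = (1 : Matrix _ _ ℝ) i j) ∧ ∀ i j, g (b i) (b j) = diagonal μ i j := by
  have hh_nonneg : ∀ u, 0 ≤ h u u := fun u => by
    rcases eq_or_ne u 0 with rfl | hu
    · simp
    · exact (hh_pos u hu).le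
  let core : InnerProductSpace.Core ℝ V :=
    { inner := fun u v => h u v
      conj_inner_symm := fun u v => hh_symm v u
      re_inner_nonneg := hh_nonneg
      add_left := fun u v w => by simp
      smul_left := fun u v r => by simp
      definite := fun u hu => by_contra fun hu0 => (hh_pos u hu0).ne' hu }
  let : NormedAddCommGroup V := core.toNormedAddCommGroup
  let : InnerProductSpace ℝ V := InnerProductSpace.ofCore core.toCore
  have hnd : h.Nondegenerate :=
    (nondegenerate_iff' h hh_nonneg ⟨hh_symm⟩).mpr hh_pos
  let T : V →ₗ[ℝ] V := (toDual h hnd).symm.toLinearMap ∘ₗ g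
  have hT : ∀ u v, h (T u) v = g u v := fun u v =>
    apply_toDual_symm_apply (hB := hnd) _ _
  have hT_symm : T.IsSymmetric := fun u v => by
    change h (T u) v = h u (T v)
    rw [hT, hh_symm, hT, hg_symm]
  let b := hT_symm.eigenvectorBasis rfl
  have hb : ∀ i j, h (b i) (b j) = (1 : Matrix _ _ ℝ) i j := fun i j => by
    rw [one_apply]
    exact orthonormal_iff_ite.mp b.orthonormal i j
  refine ⟨b.toBasis, hT_symm.eigenvalues rfl, fun i j => by simpa using hb i j, fun i j => ?_⟩
  rw [← hT, b.coe_toBasis, hT_symm.apply_eigenvectorBasis, map_smul, LinearMap.smul_apply, hb,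
    ← diagonal_one, smul_eq_mul, diagonal_apply, diagonal_apply]
  simp

theorem Matrix.det_submatrix_diagonal_ofFinEmbEquiv_symm {R I : Type*} [CommRing R]
    [LinearOrder I] {k : ℕ} (d : I → R) (s t : Set.powersetCard I k) :
    ((diagonal d).submatrix (ofFinEmbEquiv.symm s) (ofFinEmbEquiv.symm t)).det =
      if s = t then ∏ i, d (ofFinEmbEquiv.symm s i) else 0 := by
  split_ifs with hst
  · subst hst
    rw [submatrix_diagonal _ _ (ofFinEmbEquiv.symm s).injective, det_diagonal]
    rfl
  · obtain ⟨x, hxs, hxt⟩ := (exists_mem_notMem_iff_ne s t).mp hst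
    obtain ⟨i, rfl⟩ := (mem_range_ofFinEmbEquiv_symm_iff_mem s x).mpr hxs
    refine det_eq_zero_of_row_eq_zero i fun j => diagonal_apply_ne _ fun h => hxt ?_
    rw [h]
    exact (mem_range_ofFinEmbEquiv_symm_iff_mem t _).mp ⟨j, rfl⟩

theorem Module.Basis.apply_self_eq_sum_repr_sq_mul {R M ι : Type*} [CommRing R] [AddCommGroup M]
    [Module R M] [Fintype ι] [DecidableEq ι] (B : Basis ι R M) (Q : M →ₗ[R] M →ₗ[R] R) (d : ι → R)
    (hQ : ∀ s t, Q (B s) (B t) = if s = t then d s else 0) (x : M) :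
    Q x x = ∑ s, B.repr x s ^ 2 * d s := by
  calc Q x x = Q (∑ s, B.repr x s • B s) (∑ t, B.repr x t • B t) := by rw [B.sum_repr]
    _ = ∑ s, B.repr x s ^ 2 * d s := by
      simp [-Basis.sum_repr, hQ, pow_two, mul_assoc]

theorem exteriorPower.apply_self_eq_sum_repr_sq_mul_prod {R V Λ I : Type*} [CommRing R]
    [AddCommGroup V] [Module R V] [AddCommGroup Λ] [Module R Λ] [LinearOrder I] [Fintype I]
    {k : ℕ} (Q : V →ₗ[R] V →ₗ[R] R) (b : Basis I R V) (d : I → R)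
    (hQ : ∀ i j, Q (b i) (b j) = diagonal d i j) (ι : V [⋀^Fin k]→ₗ[R] Λ)
    (Qk : Λ →ₗ[R] Λ →ₗ[R] R)
    (hQk : ∀ v w : Fin k → V, Qk (ι v) (ι w) = (Matrix.of fun i j => Q (v i) (w j)).det)
    (x : ⋀[R]^k V) :
    Qk (alternatingMapLinearEquiv ι x) (alternatingMapLinearEquiv ι x) =
      ∑ s, (b.exteriorPower k).repr x s ^ 2 * ∏ i, d (ofFinEmbEquiv.symm s i) := by
  let φ := alternatingMapLinearEquiv ι
  refine (b.exteriorPower k).apply_self_eq_sum_repr_sq_mul (Qk.compl₁₂ φ φ) _ (fun s t => ?_) x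
  rw [LinearMap.compl₁₂_apply, coe_basis, ιMulti_family, ιMulti_family,
    alternatingMapLinearEquiv_apply_ιMulti, alternatingMapLinearEquiv_apply_ιMulti, hQk,
    ← det_submatrix_diagonal_ofFinEmbEquiv_symm]
  congr 1
  ext i j
  exact hQ _ _

theorem stmt0_general
    (V : Type*) [AddCommGroup V] [Module ℝ V] [FiniteDimensional ℝ V]
    (g h : V →ₗ[ℝ] V →ₗ[ℝ] ℝ)
    (hg_symm : ∀ u v, g u v = g v u) (hg_pos : ∀ u, u ≠ 0 → 0 < g u u)
    (hh_symm : ∀ u v, h u v = h v u) (hh_pos : ∀ u, u ≠ 0 → 0 < h u u)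
    (C : ℝ) (hgh : ∀ u, g u u ≤ C * h u u)
    (k : ℕ)
    -- the k-th exterior power, presented by its universal alternating map
    (Λ : Type*) [AddCommGroup Λ] [Module ℝ Λ]
    (ι : V [⋀^Fin k]→ₗ[ℝ] Λ)
    (hspan : Submodule.span ℝ (Set.range ι) = ⊤)
    -- the induced inner products on the exterior power
    (gk hk : Λ →ₗ[ℝ] Λ →ₗ[ℝ] ℝ)
    (hgk : ∀ v w : Fin k → V, gk (ι v) (ι w) = Matrix.det (Matrix.of fun i j => g (v i) (w j)))
    (hhk : ∀ v w : Fin k → V, hk (ι v) (ι w) = Matrix.det (Matrix.of fun i j => h (v i) (w j))) :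
    ∀ w : Λ, gk w w ≤ C ^ k * hk w w := by
  obtain ⟨b, μ, hb_h, hb_g⟩ :=
    LinearMap.BilinForm.exists_basis_simultaneously_diagonal g h hg_symm hh_symm hh_pos
  have hμ_nonneg : ∀ i, 0 ≤ μ i := fun i => by
    simpa [hb_g] using (hg_pos (b i) (b.ne_zero i)).le
  have hμ_le : ∀ i, μ i ≤ C := fun i => by simpa [hb_g, hb_h] using hgh (b i)
  have hφ : Function.Surjective (alternatingMapLinearEquiv ι) := by
    rw [← LinearMap.range_eq_top, eq_top_iff, ← hspan, Submodule.span_le]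
    rintro _ ⟨v, rfl⟩
    exact ⟨ιMulti ℝ k v, alternatingMapLinearEquiv_apply_ιMulti ι v⟩
  intro w
  obtain ⟨x, rfl⟩ := hφ w
  rw [apply_self_eq_sum_repr_sq_mul_prod g b μ hb_g ι gk hgk,
    apply_self_eq_sum_repr_sq_mul_prod h b (fun _ => 1) hb_h ι hk hhk, Finset.mul_sum]
  refine Finset.sum_le_sum fun s _ => ?_
  rw [Finset.prod_const_one, mul_one, mul_comm]
  refine mul_le_mul_of_nonneg_right ?_ (sq_nonneg _)
  calc ∏ i, μ (ofFinEmbEquiv.symm s i) ≤ ∏ _i : Fin k, C :=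
        Finset.prod_le_prod (fun i _ => hμ_nonneg _) (fun i _ => hμ_le _)
    _ = C ^ k := by simp

/-- If two inner products `g`, `h` on a finite-dimensional real vector
space `V` satisfy `g(u,u) ≤ C·h(u,u)` with `C > 0`, then the induced inner products
`gk`, `hk` on the `k`-th exterior power (characterized by the Gram determinant formula
on decomposable vectors `ι v₁ ∧ ... ∧ ι v_k`) satisfy `gk(w,w) ≤ C^k·hk(w,w)`. -/
theorem stmt0
    (V : Type*) [AddCommGroup V] [Module ℝ V] [FiniteDimensional ℝ V]
    (g h : V →ₗ[ℝ] V →ₗ[ℝ] ℝ)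
    (hg_symm : ∀ u v, g u v = g v u) (hg_pos : ∀ u, u ≠ 0 → 0 < g u u)
    (hh_symm : ∀ u v, h u v = h v u) (hh_pos : ∀ u, u ≠ 0 → 0 < h u u)
    (C : ℝ) (hC : 0 < C) (hgh : ∀ u, g u u ≤ C * h u u)
    (k : ℕ)
    -- the k-th exterior power, presented by its universal alternating map
    (Λ : Type*) [AddCommGroup Λ] [Module ℝ Λ]
    (ι : V [⋀^Fin k]→ₗ[ℝ] Λ)
    (hspan : Submodule.span ℝ (Set.range ι) = ⊤)
    -- the induced inner products on the exterior power
    (gk hk : Λ →ₗ[ℝ] Λ →ₗ[ℝ] ℝ)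
    (hgk : ∀ v w : Fin k → V, gk (ι v) (ι w) = Matrix.det (Matrix.of fun i j => g (v i) (w j)))
    (hhk : ∀ v w : Fin k → V, hk (ι v) (ι w) = Matrix.det (Matrix.of fun i j => h (v i) (w j)))
    (hgk_symm : ∀ w w', gk w w' = gk w' w) (hgk_nonneg : ∀ w, 0 ≤ gk w w)
    (hhk_symm : ∀ w w', hk w w' = hk w' w) (hhk_nonneg : ∀ w, 0 ≤ hk w w) :
    ∀ w : Λ, gk w w ≤ C ^ k * hk w w :=
  stmt0_general V g h hg_symm hg_pos hh_symm hh_pos C hgh k Λ ι hspan gk hk hgk hhk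
end

section
/- Let A : V → W be a linear map between finite-dimensional real inner product spaces. Then the induced map A^{∧k} : Λ^k(V) → Λ^k(W) on k-th exterior powers satisfies ‖A^{∧k}‖ ≤ ‖A‖^k, where the norms are operator norms with respect to the induced inner products on the exterior powers. -/
open scoped InnerProductSpace

/-! Pick an orthonormal basis `e` of `V` whose image under `A` is orthogonal (an eigenbasis of
`A† A`). By the Gram determinant formula, the wedges `e_{s₁} ∧ ⋯ ∧ e_{sₖ}` over `k`-subsets `s`
form an orthonormal basis of `ΛV`, and `A^{∧k}` sends them to the pairwise orthogonal vectors
`A e_{s₁} ∧ ⋯ ∧ A e_{sₖ}` of norm `∏ ‖A e_{sᵢ}‖ ≤ ‖A‖ ^ k`. An operator mapping an orthonormal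
basis to an orthogonal family has norm at most the largest norm of the images (Pythagoras). -/

open Set.powersetCard

section

variable {E F : Type*} [NormedAddCommGroup E] [InnerProductSpace ℝ E]
  [NormedAddCommGroup F] [InnerProductSpace ℝ F]

theorem norm_sum_sq_eq_sum_norm_sq_of_pairwise_inner_eq_zero {ι : Type*} [Fintype ι]
    {v : ι → E} (hv : Pairwise fun i j => ⟪v i, v j⟫_ℝ = 0) :
    ‖∑ i, v i‖ ^ 2 = ∑ i, ‖v i‖ ^ 2 := by
  classical
  rw [← real_inner_self_eq_norm_sq, sum_inner]
  refine Finset.sum_congr rfl fun i _ => ?_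
  rw [inner_sum, Finset.sum_eq_single i (fun j _ hji => hv hji.symm) (by simp),
    real_inner_self_eq_norm_sq]

theorem ContinuousLinearMap.opNorm_le_of_pairwise_inner_apply_orthonormalBasis_eq_zero
    {ι : Type*} [Fintype ι] (T : E →L[ℝ] F) (b : OrthonormalBasis ι ℝ E)
    (hT : Pairwise fun i j => ⟪T (b i), T (b j)⟫_ℝ = 0) {C : ℝ} (hC : 0 ≤ C)
    (hTb : ∀ i, ‖T (b i)‖ ≤ C) : ‖T‖ ≤ C := by
  refine T.opNorm_le_bound hC fun x => ?_
  have hTx : T x = ∑ i, ⟪b i, x⟫_ℝ • T (b i) := by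
    conv_lhs => rw [← b.sum_repr' x]
    simp only [map_sum, map_smul]
  refine (pow_le_pow_iff_left₀ (norm_nonneg _) (by positivity) two_ne_zero).1 ?_
  calc ‖T x‖ ^ 2 = ∑ i, ⟪b i, x⟫_ℝ ^ 2 * ‖T (b i)‖ ^ 2 := by
        rw [hTx, norm_sum_sq_eq_sum_norm_sq_of_pairwise_inner_eq_zero]
        · simp only [norm_smul, mul_pow, Real.norm_eq_abs, sq_abs]
        · intro i j hij
          simp only [real_inner_smul_left, real_inner_smul_right, hT hij, mul_zero]
    _ ≤ ∑ i, ⟪b i, x⟫_ℝ ^ 2 * C ^ 2 := by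
        gcongr with i
        exact hTb i
    _ = (C * ‖x‖) ^ 2 := by
        rw [← Finset.sum_mul, b.sum_sq_inner_right, mul_pow, mul_comm]

theorem ContinuousLinearMap.exists_orthonormalBasis_pairwise_inner_apply_eq_zero
    [FiniteDimensional ℝ E] (A : E →L[ℝ] F) :
    ∃ e : OrthonormalBasis (Fin (Module.finrank ℝ E)) ℝ E,
      Pairwise fun i j => ⟪A (e i), A (e j)⟫_ℝ = 0 := by
  -- `T = A† A`
  set T : E →L[ℝ] E :=
    InnerProductSpace.continuousLinearMapOfBilin ((innerSL ℝ).bilinearComp A A)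
  have hT : ∀ x y, ⟪T x, y⟫_ℝ = ⟪A x, A y⟫_ℝ := fun x y => by
    simp [T, InnerProductSpace.continuousLinearMapOfBilin_apply]
  have hsymm : (T : E →ₗ[ℝ] E).IsSymmetric := fun x y => by
    rw [ContinuousLinearMap.coe_coe, hT, real_inner_comm (T y), hT, real_inner_comm]
  refine ⟨hsymm.eigenvectorBasis rfl, fun i j hij => ?_⟩
  dsimp only
  rw [← hT, ← ContinuousLinearMap.coe_coe, hsymm.apply_eigenvectorBasis, real_inner_smul_left,
    (OrthonormalBasis.orthonormal _).inner_eq_zero hij, mul_zero]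

end

theorem Matrix.det_gram_of_pairwise_inner_eq_zero {E n : Type*} [NormedAddCommGroup E]
    [InnerProductSpace ℝ E] [Fintype n] [DecidableEq n] {v : n → E}
    (hv : Pairwise fun i j => ⟪v i, v j⟫_ℝ = 0) :
    (Matrix.gram ℝ v).det = ∏ i, ‖v i‖ ^ 2 := by
  have hdiag : Matrix.gram ℝ v = Matrix.diagonal fun i => ‖v i‖ ^ 2 := by
    ext i j
    rcases eq_or_ne i j with rfl | hij
    · simp [Matrix.gram_apply]
    · simp [Matrix.gram_apply, hv hij, hij]
  rw [hdiag, Matrix.det_diagonal]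

section

variable {ι : Type*} [LinearOrder ι] {k : ℕ}

theorem AlternatingMap.span_range_comp_ofFinEmbEquiv_symm_eq_top {R M N : Type*} [CommRing R]
    [AddCommGroup M] [Module R M] [AddCommGroup N] [Module R N] (f : M [⋀^Fin k]→ₗ[R] N)
    (hf : Submodule.span R (Set.range f) = ⊤) {v : ι → M}
    (hv : Submodule.span R (Set.range v) = ⊤) :
    Submodule.span R (Set.range fun s : Set.powersetCard ι k => f (v ∘ ofFinEmbEquiv.symm s))
      = ⊤ := by
  set L := exteriorPower.alternatingMapLinearEquiv f
  rw [eq_top_iff, ← hf, Submodule.span_le]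
  rintro _ ⟨w, rfl⟩
  have hw : exteriorPower.ιMulti R k w ∈
      Submodule.span R (Set.range (exteriorPower.ιMulti_family R k v)) := by
    rw [exteriorPower.ιMulti_family_span_of_span R hv]
    trivial
  have hL : L ∘ exteriorPower.ιMulti_family R k v = fun s => f (v ∘ ofFinEmbEquiv.symm s) :=
    funext fun s => exteriorPower.alternatingMapLinearEquiv_apply_ιMulti f _
  have hLw := Submodule.apply_mem_span_image_of_mem_span L hw
  rwa [← Set.range_comp, hL, exteriorPower.alternatingMapLinearEquiv_apply_ιMulti] at hLw

variable {E Λ : Type*} [NormedAddCommGroup E] [InnerProductSpace ℝ E] [NormedAddCommGroup Λ]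
  [InnerProductSpace ℝ Λ] (f : E [⋀^Fin k]→ₗ[ℝ] Λ)
  (hf : ∀ v w : Fin k → E, ⟪f v, f w⟫_ℝ = (Matrix.of fun i j => ⟪v i, w j⟫_ℝ).det)
  {u : ι → E} (hu : Pairwise fun i j => ⟪u i, u j⟫_ℝ = 0)
include hf hu

theorem inner_alternatingMap_comp_ofFinEmbEquiv_symm_of_ne {s t : Set.powersetCard ι k}
    (hst : s ≠ t) : ⟪f (u ∘ ofFinEmbEquiv.symm s), f (u ∘ ofFinEmbEquiv.symm t)⟫_ℝ = 0 := by
  obtain ⟨x, hxs, hxt⟩ := (exists_mem_notMem_iff_ne s t).mp hst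
  rw [← mem_range_ofFinEmbEquiv_symm_iff_mem] at hxs hxt
  obtain ⟨i, rfl⟩ := hxs
  rw [hf]
  exact Matrix.det_eq_zero_of_row_eq_zero i fun j => hu fun h => hxt ⟨j, h.symm⟩

theorem norm_alternatingMap_comp_ofFinEmbEquiv_symm (s : Set.powersetCard ι k) :
    ‖f (u ∘ ofFinEmbEquiv.symm s)‖ = ∏ i, ‖u (ofFinEmbEquiv.symm s i)‖ := by
  refine (pow_left_inj₀ (norm_nonneg _) (by positivity) two_ne_zero).1 ?_
  rw [← real_inner_self_eq_norm_sq, hf, ← Finset.prod_pow]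
  exact Matrix.det_gram_of_pairwise_inner_eq_zero
    (hu.comp_of_injective (ofFinEmbEquiv.symm s).injective)

end

theorem stmt8_general
    {V W : Type*}
    [NormedAddCommGroup V] [InnerProductSpace ℝ V] [FiniteDimensional ℝ V]
    [NormedAddCommGroup W] [InnerProductSpace ℝ W]
    (A : V →L[ℝ] W) (k : ℕ)
    -- the k-th exterior powers with their induced inner product structures
    (ΛV ΛW : Type*)
    [NormedAddCommGroup ΛV] [InnerProductSpace ℝ ΛV]
    [NormedAddCommGroup ΛW] [InnerProductSpace ℝ ΛW]
    (ιV : V [⋀^Fin k]→ₗ[ℝ] ΛV) (ιW : W [⋀^Fin k]→ₗ[ℝ] ΛW)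
    (hspanV : Submodule.span ℝ (Set.range ιV) = ⊤)
    (hgramV : ∀ v w : Fin k → V,
      ⟪ιV v, ιV w⟫_ℝ = Matrix.det (Matrix.of fun i j => ⟪v i, w j⟫_ℝ))
    (hgramW : ∀ v w : Fin k → W,
      ⟪ιW v, ιW w⟫_ℝ = Matrix.det (Matrix.of fun i j => ⟪v i, w j⟫_ℝ))
    -- the induced map A^{∧k}
    (Ak : ΛV →L[ℝ] ΛW)
    (hAk : ∀ v : Fin k → V, Ak (ιV v) = ιW (fun i => A (v i))) :
    ‖Ak‖ ≤ ‖A‖ ^ k := by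
  obtain ⟨e, he⟩ := A.exists_orthonormalBasis_pairwise_inner_apply_eq_zero
  let wedge s := ιV (e ∘ ofFinEmbEquiv.symm s)
  have hAkwedge : ∀ s, Ak (wedge s) = ιW ((A ∘ e) ∘ ofFinEmbEquiv.symm s) := fun s => hAk _
  have hwedge : Orthonormal ℝ wedge := by
    refine ⟨fun s => ?_, fun s t hst => ?_⟩
    · simp [wedge, norm_alternatingMap_comp_ofFinEmbEquiv_symm ιV hgramV e.orthonormal.2]
    · exact inner_alternatingMap_comp_ofFinEmbEquiv_symm_of_ne ιV hgramV e.orthonormal.2 hst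
  have hspan : ⊤ ≤ Submodule.span ℝ (Set.range wedge) := by
    refine (ιV.span_range_comp_ofFinEmbEquiv_symm_eq_top hspanV ?_).ge
    simpa using e.toBasis.span_eq
  have hb : ⇑(OrthonormalBasis.mk hwedge hspan) = wedge := OrthonormalBasis.coe_mk hwedge hspan
  refine Ak.opNorm_le_of_pairwise_inner_apply_orthonormalBasis_eq_zero (.mk hwedge hspan)
    (fun s t hst => ?_) (by positivity) fun s => ?_
  · simpa only [hb, hAkwedge] using
      inner_alternatingMap_comp_ofFinEmbEquiv_symm_of_ne ιW hgramW (u := A ∘ e) he hst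
  · rw [hb, hAkwedge, norm_alternatingMap_comp_ofFinEmbEquiv_symm ιW hgramW (u := A ∘ e) he]
    calc ∏ i, ‖A (e (ofFinEmbEquiv.symm s i))‖ ≤ ∏ _i : Fin k, ‖A‖ :=
          Finset.prod_le_prod (fun _ _ => norm_nonneg _)
            fun _ _ => A.unit_le_opNorm _ (e.orthonormal.1 _).le
      _ = ‖A‖ ^ k := by simp

/-- If `A : V → W` is a linear map between finite-dimensional real
inner product spaces, then the induced map `A^{∧k}` on `k`-th exterior powers
(equipped with the induced inner products, characterized by the Gram determinant
formula) satisfies `‖A^{∧k}‖ ≤ ‖A‖^k` for the operator norms. -/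
theorem stmt8
    {V W : Type*}
    [NormedAddCommGroup V] [InnerProductSpace ℝ V] [FiniteDimensional ℝ V]
    [NormedAddCommGroup W] [InnerProductSpace ℝ W] [FiniteDimensional ℝ W]
    (A : V →L[ℝ] W) (k : ℕ)
    -- the k-th exterior powers with their induced inner product structures
    (ΛV ΛW : Type*)
    [NormedAddCommGroup ΛV] [InnerProductSpace ℝ ΛV]
    [NormedAddCommGroup ΛW] [InnerProductSpace ℝ ΛW]
    (ιV : V [⋀^Fin k]→ₗ[ℝ] ΛV) (ιW : W [⋀^Fin k]→ₗ[ℝ] ΛW)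
    (hspanV : Submodule.span ℝ (Set.range ιV) = ⊤)
    (hspanW : Submodule.span ℝ (Set.range ιW) = ⊤)
    (hgramV : ∀ v w : Fin k → V,
      ⟪ιV v, ιV w⟫_ℝ = Matrix.det (Matrix.of fun i j => ⟪v i, w j⟫_ℝ))
    (hgramW : ∀ v w : Fin k → W,
      ⟪ιW v, ιW w⟫_ℝ = Matrix.det (Matrix.of fun i j => ⟪v i, w j⟫_ℝ))
    -- the induced map A^{∧k}
    (Ak : ΛV →L[ℝ] ΛW)
    (hAk : ∀ v : Fin k → V, Ak (ιV v) = ιW (fun i => A (v i))) :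
    ‖Ak‖ ≤ ‖A‖ ^ k :=
  stmt8_general A k ΛV ΛW ιV ιW hspanV hgramV hgramW Ak hAk
end
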